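/- For every index i ∈ {1,…,n}, every set S ⊆ {1,…,n}, and every m with 0 ≤ m ≤ n − |S|, one has h_{S,i}(h⃗_Sᵐ(0⃗)) ≤ g_{S,i}(0⃗). -/

import Mathlib

/-- The pruned family of functions `g_{S,i}`: `g_{S,i} = f_i ∘ (g_{S∪{i},1},…,g_{S∪{i},n})`
if `i ∉ S`, and the constant-`false` (constant-0) function if `i ∈ S`. -/
def prunedG (n : ℕ) (f : Fin n → (Fin n → Bool) → Bool) :
    Finset (Fin n) → Fin n → (Fin n → Bool) → Bool
  | S, i => fun x =>
    if h : i ∈ S then false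
    else f i (fun j => prunedG n f (insert i S) j x)
termination_by S _ => n - S.card
decreasing_by
  have h1 : (insert i S).card = S.card + 1 := Finset.card_insert_of_notMem h
  have h2 : (insert i S).card ≤ n := by
    simpa using Finset.card_le_univ (insert i S)
  omega

/-- The family of functions `h_{S,j}`: `h_{S,j} = f_j` if `j ∉ S`, and the
constant-`false` (constant-0) function if `j ∈ S`. -/
def hFam (n : ℕ) (f : Fin n → (Fin n → Bool) → Bool)
    (S : Finset (Fin n)) (j : Fin n) : (Fin n → Bool) → Bool :=
  if j ∈ S then fun _ => false else f j

/-!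
Write `x^S_m = h⃗_Sᵐ(0⃗)`; we show `x^S_m ≤ g_S(0⃗)` componentwise for `m ≤ n - |S| + 1`, by
induction on `(n - |S|, m)` ordered lexicographically. Fix `i ∉ S` with `g_{S,i}(0⃗) = 0`. The
induction hypothesis for `S` and smaller `m` forces the `i`-th coordinate of the earlier iterates
to vanish, and as long as it vanishes the iteration of `h⃗_S` agrees with that of `h⃗_{S∪{i}}`.
Hence `x^S_{m+1,i} = f_i(x^{S∪{i}}_m)`, which by the induction hypothesis for `S ∪ {i}` and
monotonicity of `f_i` is at most `f_i(g_{S∪{i}}(0⃗)) = g_{S,i}(0⃗)`.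
-/

theorem iterate_eq_iterate_of_eq_on_orbit {α : Type*} {F G : α → α} {x : α} {m : ℕ}
    (h : ∀ k < m, F (F^[k] x) = G (F^[k] x)) : F^[m] x = G^[m] x := by
  induction m with
  | zero => rfl
  | succ m ih =>
    rw [Function.iterate_succ_apply', Function.iterate_succ_apply',
      ← ih fun k hk => h k (by omega), h m m.lt_succ_self]

section

variable {n : ℕ} {f : Fin n → (Fin n → Bool) → Bool} {S : Finset (Fin n)} {i : Fin n}

theorem prunedG_of_notMem (h : i ∉ S) (x : Fin n → Bool) :
    prunedG n f S i x = f i (fun j => prunedG n f (insert i S) j x) := by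
  rw [prunedG]
  simp only [dif_neg h]

theorem hFam_of_mem (h : i ∈ S) (x : Fin n → Bool) : hFam n f S i x = false := by
  simp [hFam, h]

theorem hFam_of_notMem (h : i ∉ S) : hFam n f S i = f i := by
  simp [hFam, h]

theorem hFam_insert_of_ne {j : Fin n} (h : j ≠ i) : hFam n f (insert i S) j = hFam n f S j := by
  simp [hFam, h]

variable (n f S)

/-- The tuple function `h⃗_S`. -/
def hVec : (Fin n → Bool) → Fin n → Bool := fun x j => hFam n f S j x

variable {n f S}

theorem hVec_insert_eq {x : Fin n → Bool} (h : hVec n f S x i = false) :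
    hVec n f (insert i S) x = hVec n f S x := by
  funext j
  by_cases hj : j = i
  · subst hj
    exact (hFam_of_mem (S.mem_insert_self j) x).trans h.symm
  · exact congrFun (hFam_insert_of_ne hj) x

theorem iterate_hVec_insert_eq {m : ℕ}
    (h : ∀ k ≤ m, (hVec n f S)^[k] (fun _ => false) i = false) :
    (hVec n f S)^[m] (fun _ => false) = (hVec n f (insert i S))^[m] (fun _ => false) := by
  refine iterate_eq_iterate_of_eq_on_orbit fun k hk => (hVec_insert_eq ?_).symm
  rw [← Function.iterate_succ_apply' (hVec n f S)]
  exact h (k + 1) hk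

end

theorem iterate_hVec_le_prunedG {n : ℕ} {f : Fin n → (Fin n → Bool) → Bool}
    (hf : ∀ i, Monotone (f i)) (S : Finset (Fin n)) :
    ∀ m ≤ n - S.card + 1,
      (hVec n f S)^[m] (fun _ => false) ≤ fun j => prunedG n f S j (fun _ => false)
  | 0, _ => fun _ => Bool.false_le _
  | m + 1, hm => fun i => by
    rw [Function.iterate_succ_apply']
    show hVec n f S _ i ≤ prunedG n f S i (fun _ => false)
    by_cases hiS : i ∈ S
    · exact (hFam_of_mem hiS _).trans_le (Bool.false_le _)
    by_cases hg : prunedG n f S i (fun _ => false) = true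
    · exact hg ▸ Bool.le_true _
    rw [Bool.not_eq_true] at hg
    have hcard : (insert i S).card = S.card + 1 := Finset.card_insert_of_notMem hiS
    have hcard_le : (insert i S).card ≤ n := by simpa using Finset.card_le_univ (insert i S)
    have hvanish : ∀ k ≤ m, (hVec n f S)^[k] (fun _ => false) i = false := fun k hk =>
      Bool.eq_false_of_le_false <| by
        simpa only [hg] using iterate_hVec_le_prunedG hf S k (by omega) i
    have hinsert : (hVec n f (insert i S))^[m] (fun _ => false) ≤
        fun j => prunedG n f (insert i S) j (fun _ => false) :=
      iterate_hVec_le_prunedG hf (insert i S) m (by omega)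
    calc hVec n f S ((hVec n f S)^[m] fun _ => false) i
        = f i ((hVec n f (insert i S))^[m] fun _ => false) := by
          rw [← iterate_hVec_insert_eq hvanish]
          exact congrFun (hFam_of_notMem hiS) _
      _ ≤ f i fun j => prunedG n f (insert i S) j fun _ => false := hf i hinsert
      _ = prunedG n f S i fun _ => false := (prunedG_of_notMem hiS _).symm
termination_by m => (n - S.card, m)
decreasing_by
  · exact Prod.Lex.right _ (by omega)
  · exact Prod.Lex.left _ _ (by omega)

theorem hFam_iterate_le_prunedG_general {n : ℕ}
    (f : Fin n → (Fin n → Bool) → Bool) (hf : ∀ i, Monotone (f i))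
    (i : Fin n) (S : Finset (Fin n)) (m : ℕ) (hm : m ≤ n - S.card) :
    hFam n f S i ((fun x j => hFam n f S j x)^[m] (fun _ => false)) ≤
      prunedG n f S i (fun _ => false) := by
  have h := iterate_hVec_le_prunedG hf S (m + 1) (by omega) i
  rwa [Function.iterate_succ_apply'] at h

/-- Lemma 4: for every index `i`, set `S`, and `m ≤ n − |S|`,
`h_{S,i}(h⃗_Sᵐ(0⃗)) ≤ g_{S,i}(0⃗)`. -/
theorem hFam_iterate_le_prunedG {n : ℕ} (hn : 1 ≤ n)
    (f : Fin n → (Fin n → Bool) → Bool) (hf : ∀ i, Monotone (f i))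
    (i : Fin n) (S : Finset (Fin n)) (m : ℕ) (hm : m ≤ n - S.card) :
    hFam n f S i ((fun x j => hFam n f S j x)^[m] (fun _ => false)) ≤
      prunedG n f S i (fun _ => false) :=
  hFam_iterate_le_prunedG_general f hf i S m hm
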